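/- arXiv:2510.17030 — 6 statements merged into one kernel-verified Lean document; each statement's English description precedes it below -/
import Mathlib

section
/- Let V be a real inner product space, R : V → V a symmetric linear endomorphism, ξ ∈ V, and t ∈ ℝ such that R(I−R)X = ⟨X,ξ⟩ξ for all X ∈ V, ((1−t)I − R)ξ = 0, and t(1−t) = ‖ξ‖². Then every eigenvalue of R lies in the closed interval [0,1]. -/
open scoped RealInnerProductSpace

/-- Eigenvalues of the tensor `R` of a hypersurface of a product of space forms
lie in `[0,1]`. -/
theorem stmt_0 {V : Type*} [NormedAddCommGroup V] [InnerProductSpace ℝ V]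
    [FiniteDimensional ℝ V]
    (R : V →ₗ[ℝ] V) (hR : R.IsSymmetric) (ξ : V) (t : ℝ)
    (h1 : ∀ X : V, R X - R (R X) = ⟪X, ξ⟫ • ξ)
    (h2 : (1 - t) • ξ - R ξ = 0)
    (h3 : t * (1 - t) = ‖ξ‖ ^ 2) :
    ∀ μ : ℝ, Module.End.HasEigenvalue R μ → μ ∈ Set.Icc (0 : ℝ) 1 := by
  intro μ hμ
  obtain ⟨X, hX⟩ := hμ.exists_hasEigenvector
  have hRX : R X = μ • X := hX.apply_eq_smul
  have h := h1 X
  rw [hRX, map_smul, hRX, smul_smul] at h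
  have hinner := congrArg (fun v => ⟪v, X⟫) h
  simp only [inner_sub_left, real_inner_smul_left] at hinner
  have hXX : (0:ℝ) < ⟪X, X⟫ := by
    rw [real_inner_self_eq_norm_sq]
    exact pow_pos (norm_pos_iff.mpr hX.2) 2
  have hsym : ⟪ξ, X⟫ = ⟪X, ξ⟫ := real_inner_comm _ _
  rw [hsym] at hinner
  have key : (μ - μ * μ) * ⟪X, X⟫ = ⟪X, ξ⟫ ^ 2 := by ring_nf; ring_nf at hinner; linarith
  have hnn : (0:ℝ) ≤ ⟪X, ξ⟫ ^ 2 := sq_nonneg _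
  constructor <;> nlinarith [sq_nonneg (μ - 1), sq_nonneg μ]
end

section
/- Let V be a finite-dimensional real inner product space, R : V → V symmetric, ξ ∈ V nonzero, and t ∈ ℝ with 0 < t < 1, such that R(I−R)X = ⟨X,ξ⟩ξ for all X, Rξ = (1−t)ξ, and t(1−t) = ‖ξ‖². Then V = ker R ⊕ ker(I−R) ⊕ span{ξ} orthogonally, and the eigenvalues of R are among {0, 1−t, 1}, with span{ξ} contained in the eigenspace for 1−t. -/
open scoped RealInnerProductSpace

/-!
Since `R X - R (R X) = ⟪X, ξ⟫ • ξ`, a vector `x` satisfies `R (R x) = R x` exactly when `x ⊥ ξ`;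
on `ξᗮ` the splitting `x = (x - R x) + R x` lands in `ker R ⊔ ker (I - R)`, and both kernels lie
in `ξᗮ`. By symmetry, an eigenvector whose eigenvalue differs from `1 - t` is orthogonal to `ξ`,
so its eigenvalue `μ` satisfies `μ - μ² = 0`.
-/

namespace LinearMap

variable {V : Type*} [NormedAddCommGroup V] [InnerProductSpace ℝ V] {R : V →ₗ[ℝ] V} {ξ x y : V}

theorem mem_ker_id_sub_iff : x ∈ ker (id - R) ↔ R x = x := by
  rw [mem_ker, sub_apply, id_apply, sub_eq_zero, eq_comm]

theorem IsSymmetric.inner_eq_zero_of_mem_ker_of_mem_ker_id_sub (hR : R.IsSymmetric)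
    (hx : x ∈ ker R) (hy : y ∈ ker (id - R)) : ⟪x, y⟫ = 0 := by
  rw [← mem_ker_id_sub_iff.1 hy, ← hR, mem_ker.1 hx, inner_zero_left]

theorem IsSymmetric.inner_eq_zero_of_mem_eigenspace {μ ν : ℝ} (hR : R.IsSymmetric) (hμν : μ ≠ ν)
    (hx : x ∈ Module.End.eigenspace R μ) (hy : y ∈ Module.End.eigenspace R ν) : ⟪x, y⟫ = 0 :=
  (hR.orthogonalFamily_eigenspaces.isOrtho hμν).inner_eq hx hy

section RankOnePerturbation

variable (h1 : ∀ X, R X - R (R X) = ⟪X, ξ⟫ • ξ)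
include h1

theorem mem_orthogonal_span_of_apply_apply_eq (hξ : ξ ≠ 0) (hx : R (R x) = R x) :
    x ∈ (ℝ ∙ ξ)ᗮ := by
  rw [Submodule.mem_orthogonal_singleton_iff_inner_left, ← smul_eq_zero_iff_left hξ, ← h1,
    hx, sub_self]

theorem ker_le_orthogonal_span (hξ : ξ ≠ 0) : ker R ≤ (ℝ ∙ ξ)ᗮ := fun _ hx =>
  mem_orthogonal_span_of_apply_apply_eq h1 hξ (by rw [mem_ker.1 hx, map_zero])

theorem ker_id_sub_le_orthogonal_span (hξ : ξ ≠ 0) : ker (id - R) ≤ (ℝ ∙ ξ)ᗮ := fun _ hx =>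
  mem_orthogonal_span_of_apply_apply_eq h1 hξ (congrArg R (mem_ker_id_sub_iff.1 hx))

theorem orthogonal_span_le_ker_sup_ker_id_sub : (ℝ ∙ ξ)ᗮ ≤ ker R ⊔ ker (id - R) := by
  intro x hx
  have hRx : R x - R (R x) = 0 := by
    rw [h1, Submodule.mem_orthogonal_singleton_iff_inner_left.1 hx, zero_smul]
  have hker : x - R x ∈ ker R := by rwa [mem_ker, map_sub]
  have hker_id_sub : R x ∈ ker (id - R) := by rwa [mem_ker, sub_apply, id_apply]
  simpa using Submodule.add_mem_sup hker hker_id_sub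

theorem ker_sup_ker_id_sub_sup_span_eq_top : ker R ⊔ ker (id - R) ⊔ ℝ ∙ ξ = ⊤ :=
  top_unique <| by
    rw [← Submodule.sup_orthogonal_of_hasOrthogonalProjection (K := ℝ ∙ ξ), sup_comm]
    exact sup_le_sup_right (orthogonal_span_le_ker_sup_ker_id_sub h1) _

theorem IsSymmetric.eq_zero_or_eq_or_eq_one_of_hasEigenvalue {ν μ : ℝ} (hR : R.IsSymmetric)
    (h2 : R ξ = ν • ξ) (hμ : Module.End.HasEigenvalue R μ) : μ = 0 ∨ μ = ν ∨ μ = 1 := by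
  obtain ⟨x, hx, hx0⟩ := hμ.exists_hasEigenvector
  rcases eq_or_ne μ ν with rfl | hμν
  · exact .inr (.inl rfl)
  have hxξ : ⟪x, ξ⟫ = 0 :=
    hR.inner_eq_zero_of_mem_eigenspace hμν hx (Module.End.mem_eigenspace_iff.2 h2)
  have hRx := Module.End.mem_eigenspace_iff.1 hx
  have hμx : (μ * (1 - μ)) • x = 0 := by
    rw [mul_sub, mul_one, sub_smul, ← smul_smul, ← hRx, ← map_smul, ← hRx, h1, hxξ, zero_smul]
  rcases (smul_eq_zero_iff_left hx0).1 hμx |> mul_eq_zero.1 with h | h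
  · exact .inl h
  · exact .inr (.inr (by linarith))

end RankOnePerturbation

end LinearMap

theorem stmt_2_general {V : Type*} [NormedAddCommGroup V] [InnerProductSpace ℝ V]
    (R : V →ₗ[ℝ] V) (hR : R.IsSymmetric) (ξ : V) (hξ : ξ ≠ 0) (t : ℝ)
    (h1 : ∀ X : V, R X - R (R X) = ⟪X, ξ⟫ • ξ)
    (h2 : R ξ = (1 - t) • ξ) :
    (LinearMap.ker R ⊔ LinearMap.ker (LinearMap.id - R) ⊔ Submodule.span ℝ {ξ} = ⊤) ∧
    (∀ x ∈ LinearMap.ker R, ∀ y ∈ LinearMap.ker (LinearMap.id - R), ⟪x, y⟫ = 0) ∧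
    (∀ x ∈ LinearMap.ker R, ∀ y ∈ Submodule.span ℝ {ξ}, ⟪x, y⟫ = 0) ∧
    (∀ x ∈ LinearMap.ker (LinearMap.id - R), ∀ y ∈ Submodule.span ℝ {ξ}, ⟪x, y⟫ = 0) ∧
    (∀ μ : ℝ, Module.End.HasEigenvalue R μ → μ = 0 ∨ μ = 1 - t ∨ μ = 1) ∧
    (Submodule.span ℝ {ξ} ≤ Module.End.eigenspace R (1 - t)) :=
  ⟨LinearMap.ker_sup_ker_id_sub_sup_span_eq_top h1,
    fun _ hx _ hy => hR.inner_eq_zero_of_mem_ker_of_mem_ker_id_sub hx hy,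
    fun _ hx _ hy =>
      Submodule.inner_left_of_mem_orthogonal hy (LinearMap.ker_le_orthogonal_span h1 hξ hx),
    fun _ hx _ hy =>
      Submodule.inner_left_of_mem_orthogonal hy (LinearMap.ker_id_sub_le_orthogonal_span h1 hξ hx),
    fun _ => hR.eq_zero_or_eq_or_eq_one_of_hasEigenvalue h1 h2,
    (Submodule.span_singleton_le_iff_mem _ _).2 (Module.End.mem_eigenspace_iff.2 h2)⟩

/-- Structure of the tensor `R` at a point where `ξ ≠ 0`: `V` decomposes
orthogonally as `ker R ⊕ ker (I - R) ⊕ span {ξ}`, the eigenvalues of `R` are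
among `{0, 1 - t, 1}`, and `span {ξ}` lies in the eigenspace for `1 - t`. -/
theorem stmt_2 {V : Type*} [NormedAddCommGroup V] [InnerProductSpace ℝ V]
    [FiniteDimensional ℝ V]
    (R : V →ₗ[ℝ] V) (hR : R.IsSymmetric) (ξ : V) (hξ : ξ ≠ 0) (t : ℝ)
    (ht0 : 0 < t) (ht1 : t < 1)
    (h1 : ∀ X : V, R X - R (R X) = ⟪X, ξ⟫ • ξ)
    (h2 : R ξ = (1 - t) • ξ)
    (h3 : t * (1 - t) = ‖ξ‖ ^ 2) :
    (LinearMap.ker R ⊔ LinearMap.ker (LinearMap.id - R) ⊔ Submodule.span ℝ {ξ} = ⊤) ∧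
    (∀ x ∈ LinearMap.ker R, ∀ y ∈ LinearMap.ker (LinearMap.id - R), ⟪x, y⟫ = 0) ∧
    (∀ x ∈ LinearMap.ker R, ∀ y ∈ Submodule.span ℝ {ξ}, ⟪x, y⟫ = 0) ∧
    (∀ x ∈ LinearMap.ker (LinearMap.id - R), ∀ y ∈ Submodule.span ℝ {ξ}, ⟪x, y⟫ = 0) ∧
    (∀ μ : ℝ, Module.End.HasEigenvalue R μ → μ = 0 ∨ μ = 1 - t ∨ μ = 1) ∧
    (Submodule.span ℝ {ξ} ≤ Module.End.eigenspace R (1 - t)) :=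
  stmt_2_general R hR ξ hξ t h1 h2
end

section
/- Let β : V × V → W be a symmetric bilinear form, where V, W are finite-dimensional real vector spaces and W carries a positive definite inner product, such that ⟨β(X,Y), β(Z,T)⟩ = ⟨β(X,T), β(Z,Y)⟩ for all X,Y,Z,T ∈ V (β is flat). Then dim N(β) ≥ dim V − dim S(β), where N(β) = {X : β(X,Y)=0 for all Y} and S(β) = span{β(X,Y) : X,Y ∈ V}. -/
open scoped RealInnerProductSpace

open Module LinearMap Polynomial Matrix

section aux

variable {W : Type*} [NormedAddCommGroup W] [InnerProductSpace ℝ W]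

private lemma gram_mulVec_zero {k : ℕ} (u : Fin k → W) (g : Fin k → ℝ)
    (hg : (Matrix.of fun i j => (⟪u i, u j⟫ : ℝ)).mulVec g = 0) :
    ∑ j, g j • u j = 0 := by
  have h : ∀ i, ⟪u i, ∑ j, g j • u j⟫ = 0 := by
    intro i
    have h0 := congrFun hg i
    simpa [Matrix.mulVec, dotProduct, inner_sum, real_inner_smul_right, mul_comm] using h0
  have h2 : ⟪∑ j, g j • u j, ∑ j, g j • u j⟫ = 0 := by
    rw [sum_inner]
    simp [real_inner_smul_left, h]
  exact inner_self_eq_zero.mp h2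

private lemma gram_det_ne_zero {k : ℕ} {u : Fin k → W} (hu : LinearIndependent ℝ u) :
    (Matrix.of fun i j => (⟪u i, u j⟫ : ℝ)).det ≠ 0 := by
  intro hdet
  obtain ⟨g, hg0, hg⟩ := Matrix.exists_mulVec_eq_zero_iff.mpr hdet
  have hs := gram_mulVec_zero u g hg
  have hz := Fintype.linearIndependent_iff.mp hu g hs
  exact hg0 (funext hz)

private lemma gram_det_zero_of_dep {k : ℕ} {u : Fin k → W}
    (hu : ¬ LinearIndependent ℝ u) :
    (Matrix.of fun i j => (⟪u i, u j⟫ : ℝ)).det = 0 := by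
  rw [← Matrix.exists_mulVec_eq_zero_iff]
  obtain ⟨g, hsum, i, hi⟩ := Fintype.not_linearIndependent_iff.mp hu
  refine ⟨g, fun h => hi (congrFun h i), ?_⟩
  funext i'
  have h0 : ⟪u i', ∑ j, g j • u j⟫ = (0:ℝ) := by rw [hsum, inner_zero_right]
  simpa [Matrix.mulVec, dotProduct, inner_sum, real_inner_smul_right, mul_comm] using h0

variable {V : Type*} [AddCommGroup V] [Module ℝ V] [FiniteDimensional ℝ V]
  [FiniteDimensional ℝ W]

set_option maxHeartbeats 1000000 in
private lemma key_lemma (β : V →ₗ[ℝ] V →ₗ[ℝ] W)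
    (hsymm : ∀ X Y : V, β X Y = β Y X)
    (hflat : ∀ X Y Z T : V, ⟪β X Y, β Z T⟫ = ⟪β X T, β Z Y⟫)
    (Y₀ : V)
    (hmax : ∀ Z : V, Module.finrank ℝ (LinearMap.range (β Z)) ≤
      Module.finrank ℝ (LinearMap.range (β Y₀))) :
    LinearMap.ker (β Y₀) ≤ LinearMap.ker β := by
  classical
  intro x hx
  have hX0 : β x Y₀ = 0 := by rw [hsymm]; exact hx
  rw [LinearMap.mem_ker]
  ext Y
  rw [LinearMap.zero_apply]
  set w := β x Y with hw
  -- Step 1: w is orthogonal to the image of β(·, Y₀)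
  have step1 : ∀ v : V, ⟪β v Y₀, w⟫ = 0 := by
    intro v
    rw [hw, hflat v Y₀ x Y, hX0, inner_zero_right]
  set r := Module.finrank ℝ (LinearMap.range (β Y₀)) with hr
  -- pick preimages of a basis of the range of β Y₀
  obtain ⟨v, hvind⟩ : ∃ v : Fin r → V,
      LinearIndependent ℝ fun i => β Y₀ (v i) := by
    let b := Module.finBasis ℝ (LinearMap.range (β Y₀))
    choose v hv using fun i => LinearMap.mem_range.mp (b i).2
    refine ⟨v, ?_⟩
    have hfn : (fun i => β Y₀ (v i)) = fun i => ((b i : W)) := funext hv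
    rw [hfn]
    exact b.linearIndependent.map' _ (LinearMap.range (β Y₀)).ker_subtype
  set v' : Fin (r+1) → V := Fin.snoc v x with hv'
  set p : Fin (r+1) → W := fun i => β (v' i) Y₀ with hp
  set q : Fin (r+1) → W := fun i => β (v' i) Y with hq
  have hplast : p (Fin.last r) = 0 := by
    simp only [hp, hv', Fin.snoc_last]; exact hX0
  have hqlast : q (Fin.last r) = w := by
    simp only [hq, hv', Fin.snoc_last, hw]
  have hpcast : ∀ i : Fin r, p i.castSucc = β Y₀ (v i) := by
    intro i
    simp only [hp, hv', Fin.snoc_castSucc]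
    exact hsymm _ _
  have hpind : LinearIndependent ℝ fun i : Fin r => p i.castSucc := by
    rw [funext hpcast]; exact hvind
  have hporth : ∀ i, ⟪p i, w⟫ = 0 := fun i => step1 (v' i)
  -- Step 2: vanishing Gram determinants for all t
  have hdet0 : ∀ t : ℝ,
      (Matrix.of fun i j : Fin (r+1) =>
        (⟪p i + t • q i, p j + t • q j⟫ : ℝ)).det = 0 := by
    intro t
    apply gram_det_zero_of_dep
    intro hind
    have hmem : ∀ i, p i + t • q i ∈ LinearMap.range (β (Y₀ + t • Y)) := by
      intro i
      refine ⟨v' i, ?_⟩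
      rw [hsymm (Y₀ + t • Y) (v' i)]
      simp [hp, hq, map_add, _root_.map_smul]
    have hspan : Submodule.span ℝ (Set.range fun i => p i + t • q i)
        ≤ LinearMap.range (β (Y₀ + t • Y)) := by
      rw [Submodule.span_le]; rintro _ ⟨i, rfl⟩; exact hmem i
    have h1 := finrank_span_eq_card hind
    have h2 := Submodule.finrank_mono hspan
    rw [h1] at h2
    have h3 := (hmax (Y₀ + t • Y))
    simp only [Fintype.card_fin] at h2
    omega
  -- Step 3: polynomial matrix
  set M : Matrix (Fin (r+1)) (Fin (r+1)) (Polynomial ℝ) :=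
    Matrix.of (fun i j => C (⟪p i, p j⟫ : ℝ) + C (⟪p i, q j⟫ + ⟪q i, p j⟫ : ℝ) * X
      + C (⟪q i, q j⟫ : ℝ) * X ^ 2) with hM
  have hMeval : ∀ t : ℝ, M.map (eval t) =
      Matrix.of fun i j : Fin (r+1) => (⟪p i + t • q i, p j + t • q j⟫ : ℝ) := by
    intro t
    ext i j
    simp only [hM, Matrix.map_apply, Matrix.of_apply, eval_add, eval_mul, eval_C, eval_X,
      eval_pow, inner_add_left, inner_add_right, real_inner_smul_left, real_inner_smul_right]
    ring
  have hMdet : M.det = 0 := by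
    apply Polynomial.funext
    intro t
    rw [eval_zero, ← Polynomial.coe_evalRingHom, RingHom.map_det, RingHom.mapMatrix_apply,
      Polynomial.coe_evalRingHom, hMeval t, hdet0 t]
  -- Step 4: factor X^2 out of the last column
  set c : Fin (r+1) → Polynomial ℝ := fun i => C (⟪q i, w⟫ : ℝ) with hc
  have hcol : ∀ i, M i (Fin.last r) = X ^ 2 * c i := by
    intro i
    have h1 : (⟪p i, p (Fin.last r)⟫ : ℝ) = 0 := by rw [hplast, inner_zero_right]
    have h2 : (⟪p i, q (Fin.last r)⟫ : ℝ) = 0 := by rw [hqlast]; exact hporth i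
    have h3 : (⟪q i, p (Fin.last r)⟫ : ℝ) = 0 := by rw [hplast, inner_zero_right]
    simp only [hM, Matrix.of_apply, h1, h2, h3, hqlast, hporth i, hc, map_zero, add_zero, zero_add,
      zero_mul, mul_zero]
    ring
  have hM2 : M.det = X ^ 2 * (M.updateCol (Fin.last r) c).det := by
    conv_lhs => rw [← M.updateCol_eq_self (Fin.last r)]
    rw [show (fun i => M i (Fin.last r)) = (X ^ 2 : Polynomial ℝ) • c from
      funext fun i => by simpa [Pi.smul_apply, smul_eq_mul] using hcol i]
    exact Matrix.det_updateCol_smul _ _ _ _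
  have hdet2 : (M.updateCol (Fin.last r) c).det = 0 := by
    have h := hMdet
    rw [hM2, mul_eq_zero] at h
    rcases h with h | h
    · exact absurd h (pow_ne_zero _ Polynomial.X_ne_zero)
    · exact h
  -- Step 5: evaluate at 0
  set N : Matrix (Fin (r+1)) (Fin (r+1)) ℝ :=
    (M.updateCol (Fin.last r) c).map (evalRingHom 0) with hN
  have hNdet : N.det = 0 := by
    have h := RingHom.map_det (evalRingHom 0) (M.updateCol (Fin.last r) c)
    rw [hdet2, map_zero, RingHom.mapMatrix_apply] at h
    rw [hN]
    exact h.symm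
  -- Step 6: expand along the last row
  set A : Matrix (Fin r) (Fin r) ℝ :=
    Matrix.of (fun i j : Fin r => (⟪p i.castSucc, p j.castSucc⟫ : ℝ)) with hA
  have hAne : A.det ≠ 0 := gram_det_ne_zero hpind
  have hrowzero : ∀ j : Fin (r+1), j ≠ Fin.last r → N (Fin.last r) j = 0 := by
    intro j hj
    simp only [hN, Matrix.map_apply, Matrix.updateCol_apply, hj, if_false, hM,
      Matrix.of_apply]
    have h1 : (⟪p (Fin.last r), p j⟫ : ℝ) = 0 := by rw [hplast, inner_zero_left]
    simp [h1]
  have hcorner : N (Fin.last r) (Fin.last r) = ⟪w, w⟫ := by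
    simp only [hN, Matrix.map_apply, Matrix.updateCol_apply, if_pos rfl, hc]
    rw [hqlast]
    simp
  have hsub : N.submatrix (Fin.last r).succAbove (Fin.last r).succAbove = A := by
    ext i j
    have hjne : (Fin.castSucc j) ≠ Fin.last r := (Fin.castSucc_lt_last j).ne
    simp only [Matrix.submatrix_apply, Fin.succAbove_last, hN, Matrix.map_apply,
      Matrix.updateCol_apply, hjne, if_false, hM, Matrix.of_apply, hA]
    simp
  have hexp : N.det = ⟪w, w⟫ * A.det := by
    rw [Matrix.det_succ_row N (Fin.last r)]
    rw [Finset.sum_eq_single (Fin.last r)]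
    · rw [hcorner, hsub]
      have he : (-1 : ℝ) ^ ((Fin.last r : ℕ) + (Fin.last r : ℕ)) = 1 :=
        Even.neg_one_pow ⟨(Fin.last r : ℕ), rfl⟩
      rw [he, one_mul]
    · intro j _ hj
      rw [hrowzero j hj, mul_zero, zero_mul]
    · intro h
      exact absurd (Finset.mem_univ _) h
  rw [hexp] at hNdet
  rcases mul_eq_zero.mp hNdet with h | h
  · exact inner_self_eq_zero.mp h
  · exact absurd h hAne

end aux

/-- The flat bilinear form inequality in the positive definite case:
`dim N(β) ≥ dim V - dim S(β)`. -/
theorem stmt_3 {V W : Type*} [AddCommGroup V] [Module ℝ V] [FiniteDimensional ℝ V]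
    [NormedAddCommGroup W] [InnerProductSpace ℝ W] [FiniteDimensional ℝ W]
    (β : V →ₗ[ℝ] V →ₗ[ℝ] W)
    (hsymm : ∀ X Y : V, β X Y = β Y X)
    (hflat : ∀ X Y Z T : V, ⟪β X Y, β Z T⟫ = ⟪β X T, β Z Y⟫) :
    Module.finrank ℝ V - Module.finrank ℝ
        (Submodule.span ℝ {w : W | ∃ X Y : V, β X Y = w}) ≤
      Module.finrank ℝ (LinearMap.ker β) := by
  classical
  obtain ⟨Y₀, hY₀⟩ : ∃ Y₀ : V, ∀ Z : V,
      Module.finrank ℝ (LinearMap.range (β Z)) ≤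
        Module.finrank ℝ (LinearMap.range (β Y₀)) := by
    have hbdd : BddAbove (Set.range fun Z : V =>
        Module.finrank ℝ (LinearMap.range (β Z))) :=
      ⟨Module.finrank ℝ W, by rintro _ ⟨Z, rfl⟩; exact Submodule.finrank_le _⟩
    obtain ⟨Y₀, hY₀⟩ := Nat.sSup_mem (Set.range_nonempty _) hbdd
    refine ⟨Y₀, fun Z => ?_⟩
    exact le_of_le_of_eq (le_csSup hbdd ⟨Z, rfl⟩) hY₀.symm
  have hker := key_lemma β hsymm hflat Y₀ hY₀
  have h1 : LinearMap.range (β Y₀) ≤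
      Submodule.span ℝ {w : W | ∃ X Y : V, β X Y = w} := by
    rintro _ ⟨x, rfl⟩
    exact Submodule.subset_span ⟨Y₀, x, rfl⟩
  have h2 := Submodule.finrank_mono h1
  have h3 := LinearMap.finrank_range_add_finrank_ker (β Y₀)
  have h4 := Submodule.finrank_mono hker
  omega
end

section
/- Let β : V × V → W be a flat symmetric bilinear form with respect to a Lorentzian inner product on the finite-dimensional space W, and assume S(β) is nondegenerate. Then dim N(β) ≥ dim V − dim S(β). -/
/-!
Take `X₀ ∈ V` for which `β X₀` has maximal rank, and put `R = range (β X₀)`, `U = ker (β X₀)`.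
Maximality forces `β Z Y ∈ R` for `Y ∈ U` (otherwise a perturbation `β (X₀ + t Z)` would have
larger rank), and flatness then puts `β Z Y` in the radical `Ω = R ∩ R^⊥`. If `Ω = 0`, then
`U ⊆ N(β)` and `dim N(β) ≥ dim V - dim R ≥ dim V - dim S(β)`. Otherwise `Ω` is a totally isotropic
subspace of a Lorentzian space, hence a null line `ℝ ξ`, and `R ≠ S(β)` because `S(β)` is
nondegenerate, so `dim R ≤ dim S(β) - 1`. Nondegeneracy also gives `T, T'` with
`⟨β T T', ξ⟩ ≠ 0`; flatness shows that every `Y ∈ U` with `β T' Y = 0` lies in `N(β)`, and these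
`Y` form a subspace of codimension at most one in `U` because `β T'` maps `U` into `ℝ ξ`.
-/

open Module LinearMap

theorem LinearMap.map_ker_le_range_of_finrank_range_add_smul_le
    {𝕜 V W : Type*} [NontriviallyNormedField 𝕜] [CompleteSpace 𝕜]
    [AddCommGroup V] [Module 𝕜 V] [AddCommGroup W] [Module 𝕜 W] [FiniteDimensional 𝕜 W]
    {A C : V →ₗ[𝕜] W} (h : ∀ t : 𝕜, finrank 𝕜 (range (A + t • C)) ≤ finrank 𝕜 (range A)) :
    (ker A).map C ≤ range A := by
  rintro _ ⟨Y, hY : A Y = 0, rfl⟩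
  by_contra hCY
  set r := finrank 𝕜 (range A)
  choose Y' hY' using fun i => (finBasis 𝕜 (range A) i).2
  let v : Fin (r + 1) → W := Fin.snoc (fun i => A (Y' i)) (C Y)
  let z : Fin (r + 1) → W := Fin.snoc (fun i => C (Y' i)) 0
  have hv : LinearIndependent 𝕜 v := by
    refine linearIndependent_finSnoc.2 ⟨?_, fun hmem => hCY ?_⟩
    · simp only [hY']
      exact (finBasis 𝕜 (range A)).linearIndependent.map' _ (range A).ker_subtype
    · exact Submodule.span_le.2 (Set.range_subset_iff.2 fun i => mem_range_self A (Y' i)) hmem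
  -- `W` carries no topology: linear independence is tested in coordinates
  let φ := (finBasis 𝕜 W).equivFun
  have hcont : Continuous fun t : 𝕜 => φ ∘ (v + t • z) := by
    have : (fun t : 𝕜 => φ ∘ (v + t • z)) = fun t => φ ∘ v + t • (φ ∘ z) := by
      funext t i; simp
    rw [this]; fun_prop
  obtain ⟨t, hvt, ht⟩ : ∃ t : 𝕜, LinearIndependent 𝕜 (v + t • z) ∧ t ≠ 0 := by
    have hev := (hcont.tendsto' 0 _ (by simp)).eventually
      ((hv.map' φ.toLinearMap φ.ker).eventually)
    obtain ⟨t, hli, ht⟩ :=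
      ((hev.filter_mono nhdsWithin_le_nhds).and (eventually_mem_nhdsWithin (s := {0}ᶜ))).exists
    exact ⟨t, hli.of_comp φ.toLinearMap, ht⟩
  have hle : Submodule.span 𝕜 (Set.range (v + t • z)) ≤ range (A + t • C) := by
    refine Submodule.span_le.2 (Set.range_subset_iff.2 fun i => ?_)
    induction i using Fin.lastCases with
    | last => exact ⟨t⁻¹ • Y, by simp [v, z, hY, ht]⟩
    | cast i => exact ⟨Y' i, by simp [v, z]⟩
  have := (Submodule.finrank_mono hle).trans (h t)
  rw [finrank_span_eq_card hvt, Fintype.card_fin] at this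
  omega

theorem LinearMap.exists_forall_finrank_range_apply_le {K V W : Type*} [Field K]
    [AddCommGroup V] [Module K V] [AddCommGroup W] [Module K W] [FiniteDimensional K W]
    (β : V →ₗ[K] V →ₗ[K] W) : ∃ X₀, ∀ X, finrank K (range (β X)) ≤ finrank K (range (β X₀)) := by
  have hfin : (Set.range fun X => finrank K (range (β X))).Finite :=
    (Set.finite_Iic (finrank K W)).subset
      (Set.range_subset_iff.2 fun X => Submodule.finrank_le (range (β X)))
  obtain ⟨_, ⟨X₀, rfl⟩, hX₀⟩ := Set.exists_max_image _ (fun n => n) hfin (Set.range_nonempty _)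
  exact ⟨X₀, fun X => hX₀ _ ⟨X, rfl⟩⟩

namespace LinearMap.BilinForm

variable {K W ι : Type*} [Field K] [AddCommGroup W] [Module K W] [Fintype ι]
  {B : LinearMap.BilinForm K W} {e : Basis ι K W}

theorem apply_self_eq_sum_of_isOrthoᵢ (he : B.IsOrthoᵢ e) (x : W) :
    B x x = ∑ i, e.repr x i ^ 2 * B (e i) (e i) := by
  conv_lhs => rw [← e.sum_repr x]
  simp only [map_sum, map_smul, LinearMap.sum_apply, LinearMap.smul_apply, smul_eq_mul]
  refine Finset.sum_congr rfl fun i _ => ?_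
  rw [Finset.sum_eq_single i (fun j _ hji => by simp [he hji]) (by simp)]
  ring

theorem finrank_le_card_of_forall_apply_self_eq_zero [LinearOrder K] [IsStrictOrderedRing K]
    (he : B.IsOrthoᵢ e) {Ω : Submodule K W} (hΩ : ∀ x ∈ Ω, B x x = 0) :
    finrank K Ω ≤ Fintype.card {i // B (e i) (e i) ≤ 0} := by
  let coords : Ω →ₗ[K] ({i // B (e i) (e i) ≤ 0} → K) :=
    LinearMap.pi (fun i => e.coord i) ∘ₗ Ω.subtype
  suffices Function.Injective coords by
    simpa using LinearMap.finrank_le_finrank_of_injective this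
  rw [← LinearMap.ker_eq_bot, Submodule.eq_bot_iff]
  rintro ⟨x, hx⟩ (hker : coords _ = 0)
  have hneg (i) (hi : B (e i) (e i) ≤ 0) : e.repr x i = 0 := by
    simpa [coords] using congrArg (fun f => f ⟨i, hi⟩) hker
  have hterm (i) : 0 ≤ e.repr x i ^ 2 * B (e i) (e i) := by
    rcases le_or_gt (B (e i) (e i)) 0 with hi | hi
    · simp [hneg i hi]
    · positivity
  have hsum := (Finset.sum_eq_zero_iff_of_nonneg fun i _ => hterm i).1
    ((apply_self_eq_sum_of_isOrthoᵢ he x).symm.trans (hΩ x hx))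
  ext1
  refine (e.forall_coord_eq_zero_iff).1 fun i => ?_
  rcases le_or_gt (B (e i) (e i)) 0 with hi | hi
  · exact hneg i hi
  · simpa [hi.ne'] using hsum i (Finset.mem_univ i)

theorem exists_mem_apply_ne_zero_of_span_inf_orthogonal_eq_bot {s : Set W}
    (hs : Submodule.span K s ⊓ B.orthogonal (Submodule.span K s) = ⊥)
    {ξ : W} (hξs : ξ ∈ Submodule.span K s) (hξ : ξ ≠ 0) : ∃ w ∈ s, B w ξ ≠ 0 := by
  by_contra! h
  have hker : Submodule.span K s ≤ ker (B.flip ξ) := Submodule.span_le.2 h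
  exact hξ ((Submodule.mem_bot K).1 (hs ▸ ⟨hξs, fun w hw => hker hw⟩))

end LinearMap.BilinForm

theorem LinearMap.BilinForm.finrank_le_one_of_forall_apply_self_eq_zero
    {W : Type*} [AddCommGroup W] [Module ℝ W] {B : LinearMap.BilinForm ℝ W}
    {d : ℕ} {e : Basis (Fin d) ℝ W} (he : B.IsOrthoᵢ e)
    (hdiag : ∀ i, B (e i) (e i) = if (i : ℕ) = 0 then -1 else 1)
    {Ω : Submodule ℝ W} (hΩ : ∀ x ∈ Ω, B x x = 0) : finrank ℝ Ω ≤ 1 := by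
  refine (finrank_le_card_of_forall_apply_self_eq_zero he hΩ).trans
    (Fintype.card_le_one_iff.2 fun i j => Subtype.ext (Fin.ext ?_))
  have (k : {k // B (e k) (e k) ≤ 0}) : (k : ℕ) = 0 := by
    by_contra hk
    have := k.2
    rw [hdiag, if_neg hk] at this
    norm_num at this
  rw [this i, this j]

section Flat

variable {V W : Type*} [AddCommGroup V] [Module ℝ V] [AddCommGroup W] [Module ℝ W]
  {B : LinearMap.BilinForm ℝ W} {β : V →ₗ[ℝ] V →ₗ[ℝ] W}

theorem apply_mem_range_inf_orthogonal_range [FiniteDimensional ℝ W]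
    (hflat : ∀ X Y Z T : V, B (β X Y) (β Z T) = B (β X T) (β Z Y)) {X₀ : V}
    (hX₀ : ∀ X, finrank ℝ (range (β X)) ≤ finrank ℝ (range (β X₀)))
    {Y : V} (hY : β X₀ Y = 0) (Z : V) :
    β Z Y ∈ range (β X₀) ⊓ B.orthogonal (range (β X₀)) := by
  refine ⟨map_ker_le_range_of_finrank_range_add_smul_le (C := β Z) (fun t => ?_) ⟨Y, hY, rfl⟩, ?_⟩
  · have := hX₀ (X₀ + t • Z)
    rwa [map_add, map_smul] at this
  · rintro _ ⟨T, rfl⟩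
    rw [hflat, hY, map_zero, LinearMap.zero_apply]

theorem ker_apply_le_ker_of_range_inf_orthogonal_range_eq_bot [FiniteDimensional ℝ W]
    (hsymm : ∀ X Y : V, β X Y = β Y X)
    (hflat : ∀ X Y Z T : V, B (β X Y) (β Z T) = B (β X T) (β Z Y)) {X₀ : V}
    (hX₀ : ∀ X, finrank ℝ (range (β X)) ≤ finrank ℝ (range (β X₀)))
    (hΩ : range (β X₀) ⊓ B.orthogonal (range (β X₀)) = ⊥) :
    ker (β X₀) ≤ ker β := by
  intro Y (hY : β X₀ Y = 0)
  refine LinearMap.ext fun Z => ?_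
  have := apply_mem_range_inf_orthogonal_range hflat hX₀ hY Z
  rwa [hΩ, Submodule.mem_bot, ← hsymm] at this

theorem finrank_ker_apply_le_finrank_ker_add_one [FiniteDimensional ℝ V] [FiniteDimensional ℝ W]
    (hsymm : ∀ X Y : V, β X Y = β Y X)
    (hflat : ∀ X Y Z T : V, B (β X Y) (β Z T) = B (β X T) (β Z Y)) {X₀ : V}
    (hX₀ : ∀ X, finrank ℝ (range (β X)) ≤ finrank ℝ (range (β X₀)))
    {ξ : W} (hξ : range (β X₀) ⊓ B.orthogonal (range (β X₀)) ≤ ℝ ∙ ξ)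
    {T T' : V} (hT : B (β T T') ξ ≠ 0) :
    finrank ℝ (ker (β X₀)) ≤ finrank ℝ (ker β) + 1 := by
  set U := ker (β X₀)
  let L := (β T').domRestrict U
  have hrange : range L ≤ ℝ ∙ ξ := by
    rintro _ ⟨⟨Y, hY⟩, rfl⟩
    exact hξ (apply_mem_range_inf_orthogonal_range hflat hX₀ hY T')
  have hker : (ker L).map U.subtype ≤ ker β := by
    rintro _ ⟨⟨Y, hY⟩, hLY : β T' Y = 0, rfl⟩
    change β Y = 0
    refine LinearMap.ext fun Z => ?_
    obtain ⟨c, hc⟩ := Submodule.mem_span_singleton.1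
      (hξ (apply_mem_range_inf_orthogonal_range hflat hX₀ hY Z))
    have hc0 : c * B (β T T') ξ = 0 := by
      have := hflat T T' Y Z
      rwa [hsymm Y T', hLY, map_zero, hsymm Y Z, ← hc, map_smul] at this
    rw [LinearMap.zero_apply, hsymm, ← hc, (mul_eq_zero.1 hc0).resolve_right hT, zero_smul]
  calc finrank ℝ U = finrank ℝ (range L) + finrank ℝ (ker L) :=
        (finrank_range_add_finrank_ker L).symm
    _ ≤ 1 + finrank ℝ (ker β) := by
        gcongr
        · exact (Submodule.finrank_mono hrange).trans
            ((Submodule.finrank_le_one_iff_isPrincipal _).2 ⟨ξ, rfl⟩)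
        · exact (Submodule.finrank_map_subtype_eq U (ker L)).ge.trans (Submodule.finrank_mono hker)
    _ = finrank ℝ (ker β) + 1 := add_comm _ _

end Flat

theorem stmt_4_general {V W : Type*} [AddCommGroup V] [Module ℝ V] [FiniteDimensional ℝ V]
    [AddCommGroup W] [Module ℝ W] [FiniteDimensional ℝ W]
    (B : LinearMap.BilinForm ℝ W)
    -- `B` is Lorentzian: there is an orthogonal basis with exactly one
    -- timelike vector (of square `-1`) and all other vectors of square `1`.
    (hLor : ∃ e : Module.Basis (Fin (Module.finrank ℝ W)) ℝ W,
      (∀ i j, i ≠ j → B (e i) (e j) = 0) ∧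
      (∀ i, B (e i) (e i) = if (i : ℕ) = 0 then -1 else 1))
    (β : V →ₗ[ℝ] V →ₗ[ℝ] W)
    (hsymm : ∀ X Y : V, β X Y = β Y X)
    (hflat : ∀ X Y Z T : V, B (β X Y) (β Z T) = B (β X T) (β Z Y))
    (hnondeg : Submodule.span ℝ {w : W | ∃ X Y : V, β X Y = w} ⊓
        B.orthogonal (Submodule.span ℝ {w : W | ∃ X Y : V, β X Y = w}) = ⊥) :
    Module.finrank ℝ V - Module.finrank ℝ
        (Submodule.span ℝ {w : W | ∃ X Y : V, β X Y = w}) ≤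
      Module.finrank ℝ (LinearMap.ker β) := by
  obtain ⟨e, horth, hdiag⟩ := hLor
  set S := Submodule.span ℝ {w : W | ∃ X Y : V, β X Y = w}
  obtain ⟨X₀, hX₀⟩ := β.exists_forall_finrank_range_apply_le
  set R := range (β X₀)
  have hRS : R ≤ S := by
    rintro _ ⟨Y, rfl⟩
    exact Submodule.subset_span ⟨X₀, Y, rfl⟩
  have hrank : finrank ℝ R + finrank ℝ (ker (β X₀)) = finrank ℝ V :=
    finrank_range_add_finrank_ker _
  by_cases hΩ : R ⊓ B.orthogonal R = ⊥
  · have := Submodule.finrank_mono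
      (ker_apply_le_ker_of_range_inf_orthogonal_range_eq_bot hsymm hflat hX₀ hΩ)
    have := Submodule.finrank_mono hRS
    omega
  have hRS' : finrank ℝ R < finrank ℝ S :=
    Submodule.finrank_lt_finrank_of_lt (hRS.lt_of_ne fun h => hΩ (h ▸ hnondeg))
  have hΩ1 : finrank ℝ ↥(R ⊓ B.orthogonal R) ≤ 1 :=
    LinearMap.BilinForm.finrank_le_one_of_forall_apply_self_eq_zero (fun i j h => horth i j h)
      hdiag fun x hx => hx.2 x hx.1
  obtain ⟨ξ, hξ⟩ := ((Submodule.finrank_le_one_iff_isPrincipal _).1 hΩ1).principal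
  have hξ0 : ξ ≠ 0 := by rintro rfl; exact hΩ (by simpa using hξ)
  have hξS : ξ ∈ S := hRS (hξ ▸ Submodule.mem_span_singleton_self ξ : ξ ∈ R ⊓ B.orthogonal R).1
  obtain ⟨_, ⟨T, T', rfl⟩, hT⟩ :=
    LinearMap.BilinForm.exists_mem_apply_ne_zero_of_span_inf_orthogonal_eq_bot hnondeg hξS hξ0
  have := finrank_ker_apply_le_finrank_ker_add_one hsymm hflat hX₀ hξ.le hT
  omega

/-- The flat bilinear form inequality in the Lorentzian case, assuming the
image subspace `S(β)` is nondegenerate. -/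
theorem stmt_4 {V W : Type*} [AddCommGroup V] [Module ℝ V] [FiniteDimensional ℝ V]
    [AddCommGroup W] [Module ℝ W] [FiniteDimensional ℝ W]
    (B : LinearMap.BilinForm ℝ W) (hBsymm : B.IsSymm)
    -- `B` is Lorentzian: there is an orthogonal basis with exactly one
    -- timelike vector (of square `-1`) and all other vectors of square `1`.
    (hLor : ∃ e : Module.Basis (Fin (Module.finrank ℝ W)) ℝ W,
      (∀ i j, i ≠ j → B (e i) (e j) = 0) ∧
      (∀ i, B (e i) (e i) = if (i : ℕ) = 0 then -1 else 1))
    (β : V →ₗ[ℝ] V →ₗ[ℝ] W)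
    (hsymm : ∀ X Y : V, β X Y = β Y X)
    (hflat : ∀ X Y Z T : V, B (β X Y) (β Z T) = B (β X T) (β Z Y))
    (hnondeg : Submodule.span ℝ {w : W | ∃ X Y : V, β X Y = w} ⊓
        B.orthogonal (Submodule.span ℝ {w : W | ∃ X Y : V, β X Y = w}) = ⊥) :
    Module.finrank ℝ V - Module.finrank ℝ
        (Submodule.span ℝ {w : W | ∃ X Y : V, β X Y = w}) ≤
      Module.finrank ℝ (LinearMap.ker β) :=
  stmt_4_general B hLor β hsymm hflat hnondeg
end

section
/- Let (W, ⟨·,·⟩) be a 2-dimensional Lorentzian vector space, and β : V × V → W a flat symmetric bilinear form on an n-dimensional space V with n ≥ 4 and N(β) = {0}. Then S(β) is degenerate, i.e. S(β) ∩ S(β)^⊥ ≠ {0}. -/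
/-!
Write `β = a n₊ + b n₋` in null coordinates of the Lorentzian plane, so that
`2⟨w, w'⟩ = a(w) b(w') + b(w) a(w')`. Flatness then says that `a_x ∧ b_z` is symmetric in
`x, z`, where `a_x = a(β(x, ·))` and `b_z = b(β(z, ·))` are covectors on `V`.

If `a_u = 0` for some `u ≠ 0`, flatness gives `a_z ∧ b_u = 0` for all `z`, so `a` is a multiple of
`b_u ⊗ b_u`; if `a ≠ 0`, flatness then forces `a_x = b_x = 0` on `ker b_u ∩ ker b_y` for any `y`
with `b_u(y) ≠ 0`, so `dim V ≤ 2`. If `a` is nondegenerate, contracting the flatness identity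
with a vector in `ker a_x ∩ ker b_x` shows that `b_x` is a multiple of `a_x` for every `x`, hence
`b = c a`; flatness then reads `2c a_x ∧ a_z = 0`, and `a` can only be nondegenerate if `c = 0`.

Either way one null coordinate of `β` vanishes, so `S(β)` lies in a null line and is totally
isotropic, while `S(β) ≠ 0` because `β ≠ 0`.
-/

open Module LinearMap

namespace Module.Dual

variable {K V : Type*} [Field K] [AddCommGroup V] [Module K V]

def wedge (φ ψ : Dual K V) : LinearMap.BilinForm K V :=
  φ.smulRight ψ - ψ.smulRight φ

@[simp]
theorem wedge_apply (φ ψ : Dual K V) (y : V) : wedge φ ψ y = φ y • ψ - ψ y • φ := rfl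

theorem eq_smul_of_wedge_apply_eq_zero {φ ψ : Dual K V} {y : V} (h : wedge φ ψ y = 0)
    (hy : φ y ≠ 0) : ψ = (ψ y / φ y) • φ := by
  rw [wedge_apply, sub_eq_zero] at h
  rw [div_eq_inv_mul, mul_smul, ← h, inv_smul_smul₀ hy]

end Module.Dual

open Module.Dual

section

variable {K V W : Type*} [Field K] [AddCommGroup V] [Module K V] [AddCommGroup W] [Module K W]

theorem finrank_le_of_forall_apply_eq_zero [FiniteDimensional K V] {m : ℕ} (f : Fin m → Dual K V)
    (h : ∀ x, (∀ i, f i x = 0) → x = 0) : finrank K V ≤ m := by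
  have hinj : Function.Injective (LinearMap.pi f) := by
    rw [← LinearMap.ker_eq_bot, Submodule.eq_bot_iff]
    exact fun x hx ↦ h x fun i ↦ congr_fun (LinearMap.mem_ker.mp hx) i
  simpa using LinearMap.finrank_le_finrank_of_injective hinj

namespace LinearMap.BilinForm

theorem IsSymm.exists_apply_eq_smul {a : LinearMap.BilinForm K V} (ha : a.IsSymm)
    {φ : Dual K V} {y : V} (hy : φ y ≠ 0) (h : ∀ z, wedge φ (a z) y = 0) :
    ∃ κ : K, ∀ z, a z = (κ * φ z) • φ := by
  have hrow z : a z = (a z y / φ y) • φ := eq_smul_of_wedge_apply_eq_zero (h z) hy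
  refine ⟨a y y / φ y / φ y, fun z ↦ ?_⟩
  have hcol : a z y = a y y / φ y * φ z := by
    rw [ha.eq z y, congr($(hrow y) z), smul_apply, smul_eq_mul]
  rw [hrow z, hcol]
  congr 1
  ring

theorem isSymm_compr₂ {β : V →ₗ[K] V →ₗ[K] W} (hβ : ∀ x y, β x y = β y x) (f : Dual K W) :
    IsSymm (β.compr₂ f) :=
  ⟨fun x y ↦ by simp [hβ x y]⟩

/-- The flatness condition for `β = a n₊ + b n₋`, with `n₊, n₋` null and `2⟨n₊, n₋⟩ = 1`. -/
def IsFlatPair (a b : LinearMap.BilinForm K V) : Prop :=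
  ∀ x z, wedge (a x) (b z) = wedge (a z) (b x)

theorem IsFlatPair.eq_zero_of_apply_eq_zero [FiniteDimensional K V]
    {a b : LinearMap.BilinForm K V} (hab : IsFlatPair a b) (ha : a.IsSymm) (hb : b.IsSymm)
    (hker : Disjoint (ker a) (ker b)) (hdim : 2 < finrank K V) {u : V} (hu : u ≠ 0)
    (hau : a u = 0) : a = 0 := by
  by_contra ha0
  have hbu : b u ≠ 0 := fun h ↦ hu (Submodule.disjoint_def.mp hker u hau h)
  obtain ⟨y, hy⟩ : ∃ y, b u y ≠ 0 := DFunLike.ne_iff.mp hbu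
  have hwedge z : wedge (b u) (a z) y = 0 := by
    have h := congr($(hab u z) y)
    rw [hau, wedge_apply, wedge_apply, LinearMap.zero_apply, zero_smul, smul_zero, sub_zero] at h
    rw [wedge_apply, ← neg_sub, ← h, neg_zero]
  obtain ⟨κ, hκ⟩ := ha.exists_apply_eq_smul hy hwedge
  have hκ0 : κ ≠ 0 := by
    rintro rfl
    exact ha0 (LinearMap.ext fun z ↦ by simp [hκ z])
  refine hdim.not_ge (finrank_le_of_forall_apply_eq_zero ![b u, b y] fun x hx ↦ ?_)
  simp only [Fin.forall_fin_two, Matrix.cons_val_zero, Matrix.cons_val_one] at hx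
  have hax : a x = 0 := by simp [hκ x, hx.1]
  have hbx : b x = 0 := by
    have h := congr($(hab x y) y)
    simp only [hax, hκ y, hb.eq x y, hx.2, wedge_apply, smul_apply, smul_eq_mul,
      LinearMap.zero_apply, zero_smul, smul_zero, sub_self, sub_zero] at h
    simpa [hκ0, hy] using h.symm
  exact Submodule.disjoint_def.mp hker x hax hbx

theorem IsFlatPair.exists_apply_eq_smul_apply [FiniteDimensional K V]
    {a b : LinearMap.BilinForm K V} (hab : IsFlatPair a b) (hnd : a.Nondegenerate)
    (hdim : 2 < finrank K V) (x : V) : ∃ c : K, b x = c • a x := by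
  by_contra! hx
  set P := Submodule.span K (Set.range ![a x, b x])
  have hP : P ≠ ⊤ := by
    intro hP
    have h2 : finrank K P ≤ 2 := (finrank_range_le_card (R := K) ![a x, b x]).trans (by simp)
    rw [hP, finrank_top, Subspace.dual_finrank_eq] at h2
    omega
  obtain ⟨f, hf⟩ := SetLike.exists_not_mem_of_ne_top P hP
  obtain ⟨z, rfl⟩ := (a.toDual hnd).surjective f
  obtain ⟨y, hxy, hbxy, hzy⟩ : ∃ y, a x y = 0 ∧ b x y = 0 ∧ a z y ≠ 0 := by
    by_contra! h
    refine hf (mem_span_of_iInf_ker_le_ker fun y hy ↦ ?_)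
    exact h y ((Submodule.mem_iInf _).mp hy 0) ((Submodule.mem_iInf _).mp hy 1)
  have h := congr($(hab x z) y)
  simp only [wedge_apply, hxy, hbxy, zero_smul, zero_sub, sub_zero] at h
  apply hx (-(b z y) / a z y)
  rw [div_eq_inv_mul, mul_smul, neg_smul, h, inv_smul_smul₀ hzy]

theorem IsFlatPair.exists_eq_smul [FiniteDimensional K V] {a b : LinearMap.BilinForm K V}
    (hab : IsFlatPair a b) (hnd : a.Nondegenerate) (hdim : 2 < finrank K V) :
    ∃ c : K, b = c • a := by
  set A := b.symmCompOfNondegenerate a hnd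
  have hA v : a (A v) = b v := comp_symmCompOfNondegenerate_apply b hnd v
  have hinj : Function.Injective a := (a.toDual hnd).injective
  obtain ⟨c, hc⟩ := LinearMap.exists_eq_smul_id_of_forall_notLinearIndependent (f := A)
    fun v hli ↦ by
      obtain ⟨c, hc⟩ := hab.exists_apply_eq_smul_apply hnd hdim v
      have hAv : A v = c • v := hinj (by rw [hA, hc, map_smul])
      have := (hli.eq_zero_of_pair (s := c) (t := -1) (by simp [hAv])).2
      exact one_ne_zero (neg_eq_zero.mp this)
  refine ⟨c, LinearMap.ext fun v ↦ ?_⟩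
  rw [← hA, hc]
  simp

theorem IsFlatPair.eq_zero_of_nondegenerate [FiniteDimensional K V] [NeZero (2 : K)]
    {a b : LinearMap.BilinForm K V} (hab : IsFlatPair a b) (ha : a.IsSymm)
    (hnd : a.Nondegenerate) (hdim : 2 < finrank K V) : b = 0 := by
  obtain ⟨c, rfl⟩ := hab.exists_eq_smul hnd hdim
  rcases eq_or_ne c 0 with rfl | hc
  · exact zero_smul K a
  exfalso
  have hinj : Function.Injective a := (a.toDual hnd).injective
  have : Nontrivial V := Module.nontrivial_of_finrank_pos (R := K) (by omega)
  obtain ⟨x, hx⟩ := exists_ne (0 : V)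
  obtain ⟨y, hy⟩ : ∃ y, a x y ≠ 0 := DFunLike.ne_iff.mp (hinj.ne hx |>.trans_eq (map_zero a))
  have hwedge z : wedge (a x) (a z) y = 0 := by
    have h := congr($(hab z x) y)
    simp only [wedge_apply, smul_apply] at h
    have h2 : (2 * c) • wedge (a x) (a z) y = 0 := by
      rw [wedge_apply]
      linear_combination (norm := module) (-1 : K) • h
    simpa [hc, two_ne_zero] using h2
  obtain ⟨κ, hκ⟩ := ha.exists_apply_eq_smul hy hwedge
  have hrank : finrank K V ≤ 1 :=
    finrank_le_of_forall_apply_eq_zero ![a x] fun v hv ↦ hinj <| by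
      simp [hκ v, show a x v = 0 from hv 0]
  omega

theorem IsFlatPair.eq_zero_or_eq_zero [FiniteDimensional K V] [NeZero (2 : K)]
    {a b : LinearMap.BilinForm K V} (hab : IsFlatPair a b) (ha : a.IsSymm) (hb : b.IsSymm)
    (hker : Disjoint (ker a) (ker b)) (hdim : 2 < finrank K V) : a = 0 ∨ b = 0 := by
  by_cases hnd : a.Nondegenerate
  · exact .inr (hab.eq_zero_of_nondegenerate ha hnd hdim)
  · rw [nondegenerate_iff_ker_eq_bot] at hnd
    obtain ⟨u, hau, hu⟩ := Submodule.exists_mem_ne_zero_of_ne_bot hnd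
    exact .inl (hab.eq_zero_of_apply_eq_zero ha hb hker hdim hu hau)

end LinearMap.BilinForm

open LinearMap.BilinForm

theorem two_mul_apply_eq_nullCoords {B : LinearMap.BilinForm K W} (e : Basis (Fin 2) K W)
    (he01 : B (e 0) (e 1) = 0) (he10 : B (e 1) (e 0) = 0)
    (he0 : B (e 0) (e 0) = -1) (he1 : B (e 1) (e 1) = 1) (w w' : W) :
    2 * B w w' = (e.coord 0 + e.coord 1) w * (e.coord 1 - e.coord 0) w' +
      (e.coord 1 - e.coord 0) w * (e.coord 0 + e.coord 1) w' := by
  conv_lhs => rw [← e.sum_repr w, ← e.sum_repr w']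
  simp only [Fin.sum_univ_two, map_add, map_smul, LinearMap.add_apply, LinearMap.sub_apply,
    LinearMap.smul_apply, smul_eq_mul, Basis.coord_apply, he01, he10, he0, he1]
  ring

theorem disjoint_ker_nullCoords [NeZero (2 : K)] (e : Basis (Fin 2) K W) :
    Disjoint (ker (e.coord 0 + e.coord 1)) (ker (e.coord 1 - e.coord 0)) := by
  refine Submodule.disjoint_def.mpr fun w h₁ h₂ ↦ ?_
  simp only [mem_ker, LinearMap.add_apply, LinearMap.sub_apply, Basis.coord_apply] at h₁ h₂
  have h₀ : (2 : K) * e.repr w 0 = 0 := by linear_combination h₁ - h₂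
  have h₁' : (2 : K) * e.repr w 1 = 0 := by linear_combination h₁ + h₂
  refine e.ext_elem (Fin.forall_fin_two.mpr ⟨?_, ?_⟩)
  · simpa [two_ne_zero] using h₀
  · simpa [two_ne_zero] using h₁'

theorem le_orthogonal_of_le_ker [NeZero (2 : K)] {B : LinearMap.BilinForm K W} {ℓ m : Dual K W}
    (hB : ∀ w w', 2 * B w w' = ℓ w * m w' + m w * ℓ w') {S : Submodule K W} (hS : S ≤ ker ℓ) :
    S ≤ B.orthogonal S := fun w hw ↦ B.mem_orthogonal_iff.mpr fun n hn ↦ by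
  simpa [two_ne_zero, mem_ker.mp (hS hn), mem_ker.mp (hS hw)] using hB n w

theorem isFlatPair_compr₂ {B : LinearMap.BilinForm K W} {ℓ m : Dual K W}
    (hB : ∀ w w', 2 * B w w' = ℓ w * m w' + m w * ℓ w') {β : V →ₗ[K] V →ₗ[K] W}
    (hflat : ∀ X Y Z T : V, B (β X Y) (β Z T) = B (β X T) (β Z Y)) :
    IsFlatPair (β.compr₂ ℓ) (β.compr₂ m) := by
  intro x z
  ext y t
  have h := hflat x y z t
  have h₁ := hB (β x y) (β z t)
  have h₂ := hB (β x t) (β z y)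
  simp only [wedge_apply, compr₂_apply, LinearMap.sub_apply, LinearMap.smul_apply, smul_eq_mul]
  linear_combination h₂ - h₁ + 2 * h

theorem disjoint_ker_compr₂ {β : V →ₗ[K] V →ₗ[K] W} (hβ : ker β = ⊥) {ℓ m : Dual K W}
    (hℓm : Disjoint (ker ℓ) (ker m)) : Disjoint (ker (β.compr₂ ℓ)) (ker (β.compr₂ m)) := by
  refine Submodule.disjoint_def.mpr fun x hℓ hm ↦ ?_
  rw [← Submodule.mem_bot K, ← hβ, mem_ker]
  ext y : 1
  exact Submodule.disjoint_def.mp hℓm _ congr($(mem_ker.mp hℓ) y) congr($(mem_ker.mp hm) y)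

theorem span_image₂_le_ker {β : V →ₗ[K] V →ₗ[K] W} {f : Dual K W} (hf : β.compr₂ f = 0) :
    Submodule.span K {w | ∃ X Y, β X Y = w} ≤ ker f :=
  Submodule.span_le.mpr <| by
    rintro _ ⟨X, Y, rfl⟩
    exact congr($hf X Y)

theorem span_image₂_ne_bot [Nontrivial V] {β : V →ₗ[K] V →ₗ[K] W} (hβ : ker β = ⊥) :
    Submodule.span K {w | ∃ X Y, β X Y = w} ≠ ⊥ := by
  obtain ⟨x, hx⟩ := exists_ne (0 : V)
  obtain ⟨y, hy⟩ : ∃ y, β x y ≠ 0 :=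
    DFunLike.ne_iff.mp ((ker_eq_bot.mp hβ).ne hx |>.trans_eq (map_zero β))
  exact (Submodule.ne_bot_iff _).mpr ⟨β x y, Submodule.subset_span ⟨x, y, rfl⟩, hy⟩

end

theorem stmt_12_general {V W : Type*} [AddCommGroup V] [Module ℝ V] [FiniteDimensional ℝ V]
    [AddCommGroup W] [Module ℝ W]
    (B : LinearMap.BilinForm ℝ W)
    (e : Module.Basis (Fin 2) ℝ W)
    (he01 : B (e 0) (e 1) = 0) (he10 : B (e 1) (e 0) = 0)
    (he0 : B (e 0) (e 0) = -1) (he1 : B (e 1) (e 1) = 1)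
    (β : V →ₗ[ℝ] V →ₗ[ℝ] W)
    (hsymm : ∀ X Y : V, β X Y = β Y X)
    (hflat : ∀ X Y Z T : V, B (β X Y) (β Z T) = B (β X T) (β Z Y))
    (hn : 4 ≤ Module.finrank ℝ V)
    (hnull : LinearMap.ker β = ⊥) :
    Submodule.span ℝ {w : W | ∃ X Y : V, β X Y = w} ⊓
      B.orthogonal (Submodule.span ℝ {w : W | ∃ X Y : V, β X Y = w}) ≠ ⊥ := by
  set S := Submodule.span ℝ {w : W | ∃ X Y : V, β X Y = w}
  have hB := two_mul_apply_eq_nullCoords e he01 he10 he0 he1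
  have hpair := isFlatPair_compr₂ hB hflat
  have hker := disjoint_ker_compr₂ hnull (disjoint_ker_nullCoords e)
  have hiso : S ≤ B.orthogonal S := by
    rcases hpair.eq_zero_or_eq_zero (BilinForm.isSymm_compr₂ hsymm _)
      (BilinForm.isSymm_compr₂ hsymm _) hker (by omega) with h | h
    · exact le_orthogonal_of_le_ker hB (span_image₂_le_ker h)
    · exact le_orthogonal_of_le_ker (fun w w' ↦ (hB w w').trans (add_comm _ _))
        (span_image₂_le_ker h)
  have : Nontrivial V := Module.nontrivial_of_finrank_pos (R := ℝ) (by omega)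
  rw [inf_eq_left.mpr hiso]
  exact span_image₂_ne_bot hnull

/-- A flat symmetric bilinear form with values in a 2-dimensional Lorentzian
space, on a space of dimension `n ≥ 4`, with trivial nullity, has degenerate
image subspace. -/
theorem stmt_12 {V W : Type*} [AddCommGroup V] [Module ℝ V] [FiniteDimensional ℝ V]
    [AddCommGroup W] [Module ℝ W] [FiniteDimensional ℝ W]
    (hWdim : Module.finrank ℝ W = 2)
    (B : LinearMap.BilinForm ℝ W) (hBsymm : B.IsSymm)
    (e : Module.Basis (Fin 2) ℝ W)
    (he01 : B (e 0) (e 1) = 0) (he10 : B (e 1) (e 0) = 0)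
    (he0 : B (e 0) (e 0) = -1) (he1 : B (e 1) (e 1) = 1)
    (β : V →ₗ[ℝ] V →ₗ[ℝ] W)
    (hsymm : ∀ X Y : V, β X Y = β Y X)
    (hflat : ∀ X Y Z T : V, B (β X Y) (β Z T) = B (β X T) (β Z Y))
    (hn : 4 ≤ Module.finrank ℝ V)
    (hnull : LinearMap.ker β = ⊥) :
    Submodule.span ℝ {w : W | ∃ X Y : V, β X Y = w} ⊓
      B.orthogonal (Submodule.span ℝ {w : W | ∃ X Y : V, β X Y = w}) ≠ ⊥ :=
  stmt_12_general B e he01 he10 he0 he1 β hsymm hflat hn hnull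
end

section
/- Let c < 0 and suppose symmetric endomorphisms A and R of a finite-dimensional inner product space V satisfy cosh θ · R − sinh θ · A = √(−c) · I with sinh θ ≠ 0, where ker R ≠ 0, ker(I−R) ≠ 0, and Rξ = rξ for a unit vector ξ with r ∈ (0,1). If rank(sinh θ · R − cosh θ · A) ≤ 1 and A commutes with R, then √(−c)·cosh θ = 1 and √(−c)·cosh θ = r simultaneously, a contradiction; hence no such configuration exists. -/
/-- Algebraic core of the nonexistence of constant negative curvature
hypersurfaces of `ℝᵏ × H^{n-k+1}` with `k ≥ 2`: the stated configuration of
symmetric commuting operators `A`, `R` cannot exist. -/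
theorem stmt_14 {V : Type*} [NormedAddCommGroup V] [InnerProductSpace ℝ V]
    [FiniteDimensional ℝ V]
    (A R : V →ₗ[ℝ] V) (hA : A.IsSymmetric) (hR : R.IsSymmetric)
    (hcomm : A ∘ₗ R = R ∘ₗ A)
    (c θ r : ℝ) (hc : c < 0) (hθ : Real.sinh θ ≠ 0)
    (hmain : Real.cosh θ • R - Real.sinh θ • A
      = Real.sqrt (-c) • (LinearMap.id : V →ₗ[ℝ] V))
    (hker : LinearMap.ker R ≠ ⊥)
    (hker' : LinearMap.ker (LinearMap.id - R) ≠ ⊥)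
    (ξ : V) (hξ : ‖ξ‖ = 1) (hRξ : R ξ = r • ξ) (hr0 : 0 < r) (hr1 : r < 1)
    (hrank : Module.finrank ℝ
      (LinearMap.range (Real.sinh θ • R - Real.cosh θ • A)) ≤ 1) :
    False := by
  set s := Real.sqrt (-c) with hs_def
  set sh := Real.sinh θ with hsh_def
  set ch := Real.cosh θ with hch_def
  set B := sh • R - ch • A with hB_def
  obtain ⟨v, hv0, hvR⟩ : ∃ v : V, v ≠ 0 ∧ R v = 0 := by
    rw [Submodule.ne_bot_iff] at hker
    obtain ⟨v, hv, h0⟩ := hker; exact ⟨v, h0, hv⟩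
  obtain ⟨w, hw0, hwR⟩ : ∃ w : V, w ≠ 0 ∧ R w = w := by
    rw [Submodule.ne_bot_iff] at hker'
    obtain ⟨w, hw, h0⟩ := hker'
    refine ⟨w, h0, ?_⟩
    have := hw
    simp only [LinearMap.mem_ker, LinearMap.sub_apply, LinearMap.id_apply,
      sub_eq_zero] at this
    exact this.symm
  have hmainx : ∀ x : V, ch • R x - sh • A x = s • x := fun x => by
    have := congrArg (fun f : V →ₗ[ℝ] V => f x) hmain
    simpa using this
  have hsq : ch * ch - sh * sh = 1 := by
    have := Real.cosh_sq_sub_sinh_sq θ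
    nlinarith [this]
  -- Key identity: sh • B x = (s*ch) • x - R x
  have hB : ∀ x : V, sh • B x = (s * ch) • x - R x := fun x => by
    have h1 : sh • A x = ch • R x - s • x := by
      have h := hmainx x
      rw [← h]; abel
    have lhs : sh • B x = (sh * sh) • R x - ch • (sh • A x) := by
      rw [hB_def]
      simp only [LinearMap.sub_apply, LinearMap.smul_apply, smul_sub, smul_smul]
      rw [mul_comm ch sh]
    rw [lhs, h1, smul_sub, smul_smul]
    have : (sh * sh) • R x - ((ch * ch) • R x - ch • (s • x))
        = (sh * sh - ch * ch) • R x + (ch * s) • x := by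
      rw [sub_smul, smul_smul]; abel
    rw [this]
    have h2 : sh * sh - ch * ch = -1 := by linarith
    rw [h2, mul_comm ch s]
    simp only [neg_smul, one_smul]
    abel
  have hs : 0 < s := Real.sqrt_pos.2 (by linarith)
  have hch : 0 < ch := Real.cosh_pos θ
  have hsch : s * ch ≠ 0 := by positivity
  -- membership in range of B from eigenvalue equation
  have mem_of : ∀ (x : V) (l : ℝ), l ≠ 0 → sh • B x = l • x →
      x ∈ LinearMap.range B := by
    intro x l hl hx
    refine ⟨(sh / l) • x, ?_⟩
    have hBx : B x = (l / sh) • x := by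
      apply smul_right_injective V hθ
      show sh • B x = sh • ((l / sh) • x)
      rw [hx, smul_smul]
      congr 1
      field_simp
    rw [map_smul, hBx, smul_smul]
    have : sh / l * (l / sh) = 1 := by field_simp
    rw [this, one_smul]
  -- two R-eigenvectors with distinct eigenvalues in range B give contradiction
  have key : ∀ (x y : V) (a b : ℝ), x ≠ 0 → y ≠ 0 → a ≠ b →
      R x = a • x → R y = b • y →
      x ∈ LinearMap.range B → y ∈ LinearMap.range B → False := by
    intro x y a b hx hy hab hax hby hxm hym
    have hli : LinearIndependent ℝ ![x, y] := by
      rw [LinearIndependent.pair_iff]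
      intro p q hpq
      have h2 : (p * a) • x + (q * b) • y = 0 := by
        have := congrArg R hpq
        simpa [map_add, map_smul, hax, hby, smul_smul] using this
      have h3 : (q * (b - a)) • y = 0 := by
        have h4 := congrArg (a • ·) hpq
        simp only [smul_add, smul_smul, smul_zero] at h4
        have : (q * (b - a)) • y = ((p * a) • x + (q * b) • y)
            - ((a * p) • x + (a * q) • y) := by
          module
        rw [this, h2, h4, sub_zero]
      have hq : q = 0 := by
        rcases smul_eq_zero.mp h3 with h | h
        · rcases mul_eq_zero.mp h with h | h
          · exact h
          · exact absurd (sub_eq_zero.mp h).symm hab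
        · exact absurd h hy
      subst hq
      simp only [zero_smul, add_zero, smul_eq_zero] at hpq
      rcases hpq with h | h
      · exact ⟨h, rfl⟩
      · exact absurd h hx
    have hspan : Submodule.span ℝ (Set.range ![x, y]) ≤ LinearMap.range B := by
      rw [Submodule.span_le]
      rintro z ⟨i, rfl⟩
      fin_cases i
      · simpa using hxm
      · simpa using hym
    have h2le : 2 ≤ Module.finrank ℝ (LinearMap.range B) := by
      have hc2 := finrank_span_eq_card hli
      simp only [Fintype.card_fin] at hc2
      calc 2 = Module.finrank ℝ (Submodule.span ℝ (Set.range ![x, y])) :=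
            hc2.symm
        _ ≤ Module.finrank ℝ (LinearMap.range B) := Submodule.finrank_mono hspan
    omega
  have hξ0 : ξ ≠ 0 := by
    intro h0
    rw [h0, norm_zero] at hξ
    linarith
  have h1 : s * ch = 1 := by
    by_contra h
    have hw' : s * ch - 1 ≠ 0 := sub_ne_zero.mpr h
    exact key v w 0 1 hv0 hw0 (by norm_num) (by simp [hvR]) (by simp [hwR])
      (mem_of v (s * ch) hsch (by rw [hB v, hvR, sub_zero]))
      (mem_of w (s * ch - 1) hw' (by rw [hB w, hwR, sub_smul, one_smul]))
  have h2 : s * ch = r := by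
    by_contra h
    have hξ' : s * ch - r ≠ 0 := sub_ne_zero.mpr h
    exact key v ξ 0 r hv0 hξ0 hr0.ne (by simp [hvR]) hRξ
      (mem_of v (s * ch) hsch (by rw [hB v, hvR, sub_zero]))
      (mem_of ξ (s * ch - r) hξ' (by rw [hB ξ, hRξ, sub_smul]))
  linarith
end
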